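/- Let m_N be a sequence of finitely supported probability measures on a compact metric space (Θ, ρ) with at most K atoms each, and m* = Σ_{j=1}^{K*} w*_j δ_{θ*_j} with all w*_j > 0 and distinct atoms. If W₁(m_N, m*) → 0 and each m_N has exactly K* atoms, then after a suitable permutation of labels, the atoms of m_N converge to the atoms of m* in ρ and the weights converge to the w*_j. -/
import Mathlib


/-- The set of couplings of two finite probability weight vectors. -/
def IsCoupling {K K' : ℕ} (w : Fin K → ℝ) (w' : Fin K' → ℝ)
    (q : Fin K → Fin K' → ℝ) : Prop :=
  (∀ i j, 0 ≤ q i j) ∧ (∀ j, ∑ i, q i j = w' j) ∧ (∀ i, ∑ j, q i j = w i)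

/-- The first-order Wasserstein distance between the atomic measures
`m = ∑ w_j δ_{θ_j}` and `m' = ∑ w'_h δ_{θ'_h}`, as the infimum over couplings. -/
noncomputable def Wass1 {Θ : Type*} [PseudoMetricSpace Θ] {K K' : ℕ}
    (w : Fin K → ℝ) (θ : Fin K → Θ) (w' : Fin K' → ℝ) (θ' : Fin K' → Θ) : ℝ :=
  sInf {x | ∃ q : Fin K → Fin K' → ℝ, IsCoupling w w' q ∧
    x = ∑ i, ∑ j, q i j * dist (θ i) (θ' j)}

/-- Let `m_N` be a sequence of atomic probability measures on a compact metric
space, each with exactly `K⋆` atoms (distinct atoms `θN n`, positive weights `wN n`), and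
let `m⋆ = ∑ w⋆_j δ_{θ⋆_j}` with positive weights and distinct atoms.  If
`W₁(m_N, m⋆) → 0`, then after a suitable permutation of labels the atoms of `m_N` converge
to those of `m⋆` and the weights converge to the `w⋆_j`. -/
theorem atoms_and_weights_converge_of_wasserstein_tendsto_zero
    {Θ : Type*} [MetricSpace Θ] [CompactSpace Θ] {Kstar : ℕ}
    (wN : ℕ → Fin Kstar → ℝ) (θN : ℕ → Fin Kstar → Θ)
    (hwN0 : ∀ n j, 0 < wN n j) (hwN1 : ∀ n, ∑ j, wN n j = 1)
    (hθN : ∀ n, Function.Injective (θN n))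
    (wstar : Fin Kstar → ℝ) (θstar : Fin Kstar → Θ)
    (hw0 : ∀ j, 0 < wstar j) (hw1 : ∑ j, wstar j = 1)
    (hθ : Function.Injective θstar)
    (hW : Filter.Tendsto (fun n => Wass1 (wN n) (θN n) wstar θstar)
      Filter.atTop (nhds 0)) :
    ∃ σ : ℕ → Equiv.Perm (Fin Kstar),
      (∀ j, Filter.Tendsto (fun n => dist (θN n (σ n j)) (θstar j))
          Filter.atTop (nhds 0)) ∧
      (∀ j, Filter.Tendsto (fun n => wN n (σ n j)) Filter.atTop (nhds (wstar j))) := by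
  classical
  have hK : 0 < Kstar := by
    rcases Nat.eq_zero_or_pos Kstar with h | h
    · subst h; simp at hw1
    · exact h
  -- minimal separation between the atoms of m⋆
  obtain ⟨δ, hδ0, hδ⟩ : ∃ δ > 0, ∀ j k : Fin Kstar, j ≠ k → δ ≤ dist (θstar j) (θstar k) := by
    by_cases hsep : ∃ p : Fin Kstar × Fin Kstar, p.1 ≠ p.2
    · set s : Finset (Fin Kstar × Fin Kstar) :=
        Finset.univ.filter (fun p => p.1 ≠ p.2) with hs_def
      have hs : s.Nonempty := ⟨hsep.choose, by simp [hs_def, hsep.choose_spec]⟩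
      refine ⟨s.inf' hs (fun p => dist (θstar p.1) (θstar p.2)), ?_, ?_⟩
      · obtain ⟨p, hp, hval⟩ := s.exists_mem_eq_inf' hs (fun p => dist (θstar p.1) (θstar p.2))
        rw [hval]
        have hp' : p.1 ≠ p.2 := by simpa [hs_def] using hp
        exact dist_pos.mpr (fun h => hp' (hθ h))
      · intro j k hjk
        have hmem : ((j, k) : Fin Kstar × Fin Kstar) ∈ s := by
          rw [hs_def, Finset.mem_filter]
          exact ⟨Finset.mem_univ _, hjk⟩
        exact Finset.inf'_le (fun p => dist (θstar p.1) (θstar p.2)) hmem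
    · push_neg at hsep
      exact ⟨1, one_pos, fun j k hjk => absurd (hsep (j, k)) hjk⟩
  -- minimal weight of m⋆
  obtain ⟨jm, -, hjm⟩ := Finset.exists_min_image (Finset.univ : Finset (Fin Kstar)) wstar
    ⟨⟨0, hK⟩, Finset.mem_univ _⟩
  set wmin := wstar jm with hwmin_def
  have hwmin : 0 < wmin := hw0 jm
  -- choose, for each n, a permutation minimizing the total displacement
  have hex : ∀ n, ∃ s : Equiv.Perm (Fin Kstar),
      ∀ τ : Equiv.Perm (Fin Kstar),
        ∑ j, dist (θN n (s j)) (θstar j) ≤ ∑ j, dist (θN n (τ j)) (θstar j) := by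
    intro n
    obtain ⟨s, -, hs⟩ := Finset.exists_min_image Finset.univ
      (fun τ : Equiv.Perm (Fin Kstar) => ∑ j, dist (θN n (τ j)) (θstar j))
      ⟨1, Finset.mem_univ _⟩
    exact ⟨s, fun τ => hs τ (Finset.mem_univ τ)⟩
  choose σ hσ using hex
  have hK1 : (2 : ℝ) ≤ (Kstar : ℝ) + 1 := by
    have : (1 : ℝ) ≤ (Kstar : ℝ) := by exact_mod_cast hK
    linarith
  have hKpos : (0 : ℝ) < (Kstar : ℝ) + 1 := by linarith
  -- key quantitative estimate
  have key : ∀ ε > 0, ∀ᶠ n in Filter.atTop,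
      ∀ j, dist (θN n (σ n j)) (θstar j) < ε ∧ |wN n (σ n j) - wstar j| < ε := by
    intro ε hε
    set r := min ε (δ / (2 * ((Kstar : ℝ) + 1))) with hrdef
    have hr0 : 0 < r := lt_min hε (div_pos hδ0 (by positivity))
    have hrε : r ≤ ε := min_le_left _ _
    have hrδ : ((Kstar : ℝ) + 1) * r ≤ δ / 2 := by
      have h1 : r ≤ δ / (2 * ((Kstar : ℝ) + 1)) := min_le_right _ _
      calc ((Kstar : ℝ) + 1) * r ≤ ((Kstar : ℝ) + 1) * (δ / (2 * ((Kstar : ℝ) + 1))) := by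
            exact mul_le_mul_of_nonneg_left h1 (by linarith)
        _ = δ / 2 := by field_simp
    have h2r : 2 * r < δ := by nlinarith [mul_le_mul_of_nonneg_right hK1 hr0.le]
    set η := min (r * wmin) (ε * r / ((Kstar : ℝ) + 1)) with hηdef
    have hη0 : 0 < η :=
      lt_min (mul_pos hr0 hwmin) (div_pos (mul_pos hε hr0) hKpos)
    have hα : η / r ≤ ε / ((Kstar : ℝ) + 1) := by
      have h1 : η ≤ ε * r / ((Kstar : ℝ) + 1) := min_le_right _ _
      rw [div_le_div_iff₀ hr0 hKpos]
      calc η * ((Kstar : ℝ) + 1) ≤ (ε * r / ((Kstar : ℝ) + 1)) * ((Kstar : ℝ) + 1) :=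
            mul_le_mul_of_nonneg_right h1 (by linarith)
        _ = ε * r := by field_simp
    have hαε : η / r < ε := by
      refine lt_of_le_of_lt hα ?_
      rw [div_lt_iff₀ hKpos]
      nlinarith
    have hev := hW.eventually (gt_mem_nhds hη0)
    filter_upwards [hev] with n hn
    -- extract a near-optimal coupling
    have hne : Set.Nonempty {x | ∃ q : Fin Kstar → Fin Kstar → ℝ,
        IsCoupling (wN n) wstar q ∧
        x = ∑ i, ∑ j, q i j * dist (θN n i) (θstar j)} := by
      refine ⟨_, fun i j => wN n i * wstar j, ⟨fun i j => mul_nonneg (hwN0 n i).le (hw0 j).le,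
        ?_, ?_⟩, rfl⟩
      · intro j; rw [← Finset.sum_mul, hwN1 n, one_mul]
      · intro i; rw [← Finset.mul_sum, hw1, mul_one]
    rw [Wass1] at hn
    obtain ⟨C, hCmem, hCη⟩ := exists_lt_of_csInf_lt hne hn
    obtain ⟨q, ⟨hq0, hqcol, hqrow⟩, rfl⟩ := hCmem
    -- each column's cost is at most the total cost
    have hcol : ∀ j, ∑ i, q i j * dist (θN n i) (θstar j) ≤
        ∑ i, ∑ j', q i j' * dist (θN n i) (θstar j') := by
      intro j
      refine Finset.sum_le_sum fun i _ => ?_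
      exact Finset.single_le_sum
        (f := fun j' => q i j' * dist (θN n i) (θstar j'))
        (fun j' _ => mul_nonneg (hq0 i j') dist_nonneg) (Finset.mem_univ j)
    -- step 1 : each atom of m⋆ has an atom of m_N within distance r
    have step1 : ∀ j, ∃ i, 0 < q i j ∧ dist (θN n i) (θstar j) < r := by
      intro j
      by_contra hcon
      push_neg at hcon
      have hlb : r * wstar j ≤ ∑ i, q i j * dist (θN n i) (θstar j) := by
        rw [← hqcol j, Finset.mul_sum]
        refine Finset.sum_le_sum fun i _ => ?_
        rcases eq_or_lt_of_le (hq0 i j) with h | h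
        · rw [← h]; simp
        · calc r * q i j = q i j * r := mul_comm _ _
            _ ≤ q i j * dist (θN n i) (θstar j) :=
              mul_le_mul_of_nonneg_left (hcon i h) (hq0 i j)
      have h1 : r * wstar j < η := lt_of_le_of_lt (hlb.trans (hcol j)) hCη
      have h2 : η ≤ r * wmin := min_le_left _ _
      have h3 : wmin ≤ wstar j := hjm j (Finset.mem_univ j)
      nlinarith
    choose f hf1 hf2 using step1
    -- step 2 : this assignment is injective, hence a permutation
    have hfinj : Function.Injective f := by
      intro j k hjk
      by_contra hne'
      have hd := hδ j k hne'
      have ht := dist_triangle (θstar j) (θN n (f j)) (θstar k)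
      have e1 : dist (θstar j) (θN n (f j)) = dist (θN n (f j)) (θstar j) := dist_comm _ _
      have e2 : dist (θN n (f j)) (θstar k) = dist (θN n (f k)) (θstar k) := by rw [hjk]
      have := hf2 j
      have := hf2 k
      linarith
    let τ : Equiv.Perm (Fin Kstar) :=
      Equiv.ofBijective f (Finite.injective_iff_bijective.mp hfinj)
    have hτ : ∀ j, τ j = f j := fun j => rfl
    -- step 3 : uniqueness of the nearby atom
    have step3 : ∀ j i, dist (θN n i) (θstar j) < r → i = f j := by
      intro j i hi
      have hk : f (τ.symm i) = i := τ.apply_symm_apply i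
      by_contra hne'
      have hkj : τ.symm i ≠ j := fun h => hne' (by rw [← hk, h])
      have h1 := hf2 (τ.symm i)
      rw [hk] at h1
      have h2 := hδ (τ.symm i) j hkj
      have h3 := dist_triangle (θstar (τ.symm i)) (θN n i) (θstar j)
      rw [dist_comm] at h1
      linarith
    -- step 4 : weight lower bound
    have step4 : ∀ j, wstar j < wN n (f j) + η / r := by
      intro j
      have hsplit : ∑ i, q i j = q (f j) j + ∑ i ∈ Finset.univ.erase (f j), q i j :=
        (Finset.add_sum_erase Finset.univ (fun i => q i j) (Finset.mem_univ (f j))).symm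
      have herase : ∀ i ∈ Finset.univ.erase (f j),
          r * q i j ≤ q i j * dist (θN n i) (θstar j) := by
        intro i hi
        have hi' : i ≠ f j := (Finset.mem_erase.mp hi).1
        have hdist : r ≤ dist (θN n i) (θstar j) := by
          by_contra h; push_neg at h; exact hi' (step3 j i h)
        calc r * q i j = q i j * r := mul_comm _ _
          _ ≤ q i j * dist (θN n i) (θstar j) :=
            mul_le_mul_of_nonneg_left hdist (hq0 i j)
      have h1 : r * ∑ i ∈ Finset.univ.erase (f j), q i j ≤
          ∑ i, q i j * dist (θN n i) (θstar j) := by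
        rw [Finset.mul_sum]
        refine le_trans (Finset.sum_le_sum herase) ?_
        exact Finset.sum_le_sum_of_subset_of_nonneg (Finset.erase_subset _ _)
          (fun i _ _ => mul_nonneg (hq0 i j) dist_nonneg)
      have h2 : r * ∑ i ∈ Finset.univ.erase (f j), q i j < η :=
        lt_of_le_of_lt (h1.trans (hcol j)) hCη
      have h3 : ∑ i ∈ Finset.univ.erase (f j), q i j < η / r := by
        rw [lt_div_iff₀ hr0]; linarith [h2, mul_comm r (∑ i ∈ Finset.univ.erase (f j), q i j)]
      have h4 : q (f j) j ≤ wN n (f j) := by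
        rw [← hqrow (f j)]
        exact Finset.single_le_sum (fun j' _ => hq0 (f j) j') (Finset.mem_univ j)
      have h5 := hqcol j
      rw [hsplit] at h5
      linarith
    -- step 5 : weight bounds in absolute value
    have hsum : ∑ j, wN n (f j) = 1 := by
      calc ∑ j, wN n (f j) = ∑ j, wN n (τ j) := rfl
        _ = ∑ i, wN n i := Equiv.sum_comp τ (wN n)
        _ = 1 := hwN1 n
    set α := η / r with hα_def
    have hα0 : 0 < α := div_pos hη0 hr0
    have step5 : ∀ j, |wN n (f j) - wstar j| < ε := by
      intro j
      have hg : ∀ k, 0 ≤ wN n (f k) - wstar k + α := fun k => by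
        have := step4 k; rw [hα_def]; linarith
      have hgsum : ∑ k, (wN n (f k) - wstar k + α) = (Kstar : ℝ) * α := by
        have h : ∑ k, (wN n (f k) - wstar k + α) =
            (∑ k, wN n (f k)) - (∑ k, wstar k) + (Kstar : ℝ) * α := by
          rw [Finset.sum_add_distrib, Finset.sum_sub_distrib, Finset.sum_const,
            Finset.card_univ, Fintype.card_fin, nsmul_eq_mul]
        rw [h, hsum, hw1]; ring
      have hle : wN n (f j) - wstar j + α ≤ (Kstar : ℝ) * α := by
        rw [← hgsum]
        exact Finset.single_le_sum (fun k _ => hg k) (Finset.mem_univ j)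
      have hKα : (Kstar : ℝ) * α ≤ (Kstar : ℝ) * (ε / ((Kstar : ℝ) + 1)) :=
        mul_le_mul_of_nonneg_left hα (Nat.cast_nonneg _)
      have hKε : (Kstar : ℝ) * (ε / ((Kstar : ℝ) + 1)) < ε := by
        calc (Kstar : ℝ) * (ε / ((Kstar : ℝ) + 1)) = ε * ((Kstar : ℝ) / ((Kstar : ℝ) + 1)) := by
              ring
          _ < ε * 1 := by
              refine mul_lt_mul_of_pos_left ?_ hε
              rw [div_lt_one hKpos]; linarith
          _ = ε := mul_one ε
      have hup : wN n (f j) - wstar j < ε := by linarith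
      have hlo : -ε < wN n (f j) - wstar j := by
        have := step4 j
        have hαε' : α < ε := hαε
        linarith
      rw [abs_lt]; exact ⟨hlo, hup⟩
    -- step 6 : the minimizing permutation coincides with f
    have hub : ∑ j, dist (θN n (σ n j)) (θstar j) ≤ (Kstar : ℝ) * r := by
      refine le_trans (hσ n τ) ?_
      calc ∑ j, dist (θN n (τ j)) (θstar j) ≤ ∑ _j : Fin Kstar, r :=
            Finset.sum_le_sum (fun j _ => (hf2 j).le)
        _ = (Kstar : ℝ) * r := by
            rw [Finset.sum_const, Finset.card_univ, Fintype.card_fin, nsmul_eq_mul]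
    have hσr : ∀ j, dist (θN n (σ n j)) (θstar j) ≤ (Kstar : ℝ) * r := by
      intro j
      refine le_trans ?_ hub
      exact Finset.single_le_sum (f := fun k => dist (θN n (σ n k)) (θstar k))
        (fun k _ => dist_nonneg) (Finset.mem_univ j)
    have hσf : ∀ j, σ n j = f j := by
      intro j
      have hk : f (τ.symm (σ n j)) = σ n j := τ.apply_symm_apply (σ n j)
      by_contra hne'
      have hkj : τ.symm (σ n j) ≠ j := fun h => hne' (by rw [← hk, h])
      have h1 := hf2 (τ.symm (σ n j))
      rw [hk] at h1
      have h2 := hδ (τ.symm (σ n j)) j hkj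
      have h3 := dist_triangle (θstar (τ.symm (σ n j))) (θN n (σ n j)) (θstar j)
      have h4 := hσr j
      rw [dist_comm] at h1
      have hexp : ((Kstar : ℝ) + 1) * r = (Kstar : ℝ) * r + r := by ring
      linarith
    intro j
    refine ⟨?_, ?_⟩
    · rw [hσf j]; exact lt_of_lt_of_le (hf2 j) hrε
    · rw [hσf j]; exact step5 j
  -- conclude the two convergences
  refine ⟨σ, fun j => ?_, fun j => ?_⟩
  · rw [Metric.tendsto_atTop]
    intro ε hε
    obtain ⟨N, hN⟩ := Filter.eventually_atTop.mp (key ε hε)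
    refine ⟨N, fun n hn => ?_⟩
    rw [Real.dist_eq, sub_zero, abs_of_nonneg dist_nonneg]
    exact (hN n hn j).1
  · rw [Metric.tendsto_atTop]
    intro ε hε
    obtain ⟨N, hN⟩ := Filter.eventually_atTop.mp (key ε hε)
    refine ⟨N, fun n hn => ?_⟩
    rw [Real.dist_eq]
    exact (hN n hn j).2
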